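/- Let D be an unbounded uniform domain in ℝ^d containing the origin, with uniformity constant C ≥ 1. Then for every k ≥ 1 there exists a point y_k ∈ D with C·k ≤ |y_k| ≤ C²·k such that the open ball B(y_k, k) is contained in D. -/

import Mathlib

open MeasureTheory Set Metric Filter
open scoped ENNReal Topology RealInnerProductSpace

noncomputable section

/-- Distributional (weak) gradient of `u` on the open set `D`. -/
def HasWeakGradOn {d : ℕ} (D : Set (EuclideanSpace ℝ (Fin d))) (u : EuclideanSpace ℝ (Fin d) → ℝ)
    (g : EuclideanSpace ℝ (Fin d) → EuclideanSpace ℝ (Fin d)) : Prop :=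
  ∀ φ : EuclideanSpace ℝ (Fin d) → ℝ, ContDiff ℝ (⊤ : ℕ∞) φ → HasCompactSupport φ → tsupport φ ⊆ D →
    ∀ i : Fin d, ∫ x in D, u x * fderiv ℝ φ x (EuclideanSpace.single i 1)
      = - ∫ x in D, g x i * φ x

/-- `u ∈ BL(D)` (Beppo Levi space), with distributional gradient `g`:
`u ∈ L²_loc(D)` and `g ∈ L²(D; ℝ^d)`. -/
def MemBL {d : ℕ} (D : Set (EuclideanSpace ℝ (Fin d))) (u : EuclideanSpace ℝ (Fin d) → ℝ)
    (g : EuclideanSpace ℝ (Fin d) → EuclideanSpace ℝ (Fin d)) : Prop :=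
  (∀ K : Set (EuclideanSpace ℝ (Fin d)), K ⊆ D → IsCompact K →
      IntegrableOn (fun x => (u x) ^ 2) K volume) ∧
  MemLp g 2 (volume.restrict D) ∧ HasWeakGradOn D u g

/-- The Dirichlet integral `D(u,v) = ∫_D ∇u·∇v dx`, expressed through the gradients. -/
def Dform {d : ℕ} (D : Set (EuclideanSpace ℝ (Fin d)))
    (g h : EuclideanSpace ℝ (Fin d) → EuclideanSpace ℝ (Fin d)) : ℝ :=
  ∫ x in D, ⟪g x, h x⟫

/-- `u ∈ W^{1,2}(D)` with gradient `g`. -/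
def MemW12 {d : ℕ} (D : Set (EuclideanSpace ℝ (Fin d))) (u : EuclideanSpace ℝ (Fin d) → ℝ)
    (g : EuclideanSpace ℝ (Fin d) → EuclideanSpace ℝ (Fin d)) : Prop :=
  MemBL D u g ∧ MemLp u 2 (volume.restrict D)

/-- `gn` is a Cauchy sequence for the Dirichlet energy on `D`. -/
def DCauchy {d : ℕ} (D : Set (EuclideanSpace ℝ (Fin d)))
    (gn : ℕ → EuclideanSpace ℝ (Fin d) → EuclideanSpace ℝ (Fin d)) : Prop :=
  ∀ ε > (0:ℝ), ∃ N, ∀ p ≥ N, ∀ q ≥ N, Dform D (gn p - gn q) (gn p - gn q) < ε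

/-- `u ∈ W^{1,2}_e(D)` (the extended Dirichlet/Sobolev space) with gradient `g`:
`u` is the a.e. limit of a `D`-Cauchy sequence in `W^{1,2}(D)` whose gradients
converge in Dirichlet energy to `g`. -/
def MemW12e {d : ℕ} (D : Set (EuclideanSpace ℝ (Fin d))) (u : EuclideanSpace ℝ (Fin d) → ℝ)
    (g : EuclideanSpace ℝ (Fin d) → EuclideanSpace ℝ (Fin d)) : Prop :=
  ∃ (un : ℕ → EuclideanSpace ℝ (Fin d) → ℝ)
    (gn : ℕ → EuclideanSpace ℝ (Fin d) → EuclideanSpace ℝ (Fin d)),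
    (∀ n, MemW12 D (un n) (gn n)) ∧ DCauchy D gn ∧
    (∀ᵐ x ∂volume.restrict D, Tendsto (fun n => un n x) atTop (𝓝 (u x))) ∧
    Tendsto (fun n => Dform D (gn n - g) (gn n - g)) atTop (𝓝 0)

/-- Transience of the Dirichlet form `(½𝐃, W^{1,2}(D))`, via the standard criterion. -/
def TransientW12 {d : ℕ} (D : Set (EuclideanSpace ℝ (Fin d))) : Prop :=
  ∀ u g, MemW12e D u g → Dform D g g = 0 → u =ᵐ[volume.restrict D] 0

/-- Recurrence of the Dirichlet form `(½𝐃, W^{1,2}(D))`: `1 ∈ W^{1,2}_e(D)` with zero energy. -/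
def RecurrentW12 {d : ℕ} (D : Set (EuclideanSpace ℝ (Fin d))) : Prop :=
  MemW12e D (fun _ => (1:ℝ)) (fun _ => 0)

/-- `u ∈ ℍ*(D)`: `u ∈ BL(D)` (with gradient `g`) is `𝐃`-orthogonal to `W^{1,2}_e(D)`. -/
def MemHstar {d : ℕ} (D : Set (EuclideanSpace ℝ (Fin d))) (u : EuclideanSpace ℝ (Fin d) → ℝ)
    (g : EuclideanSpace ℝ (Fin d) → EuclideanSpace ℝ (Fin d)) : Prop :=
  MemBL D u g ∧ ∀ v h, MemW12e D v h → Dform D g h = 0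

/-- `D` is a uniform domain with constant `C`. -/
def IsUniformDomain {d : ℕ} (D : Set (EuclideanSpace ℝ (Fin d))) (C : ℝ) : Prop :=
  ∀ x ∈ D, ∀ y ∈ D, ∃ γ : ℝ → EuclideanSpace ℝ (Fin d),
    ContinuousOn γ (Icc 0 1) ∧ γ 0 = x ∧ γ 1 = y ∧
    (∀ t ∈ Icc (0:ℝ) 1, γ t ∈ D) ∧
    eVariationOn γ (Icc 0 1) ≤ ENNReal.ofReal (C * dist x y) ∧
    ∀ t ∈ Icc (0:ℝ) 1, min (dist x (γ t)) (dist (γ t) y) ≤ C * infDist (γ t) Dᶜ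

/-- `u` is harmonic on `D` in the sense of Schwartz distributions: `Δu = 0`. -/
def IsDistribHarmonic {d : ℕ} (D : Set (EuclideanSpace ℝ (Fin d)))
    (u : EuclideanSpace ℝ (Fin d) → ℝ) : Prop :=
  ∀ φ : EuclideanSpace ℝ (Fin d) → ℝ, ContDiff ℝ (⊤ : ℕ∞) φ → HasCompactSupport φ → tsupport φ ⊆ D →
    ∫ x in D, u x * (∑ i : Fin d,
      fderiv ℝ (fun y => fderiv ℝ φ y (EuclideanSpace.single i 1)) x
        (EuclideanSpace.single i 1)) = 0

/-- `D ∈ 𝒟`: `D` is a domain such that the Dirichlet form `(½𝐃, W^{1,2}(D))` is regular on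
`L²(closure D)`, i.e. `W^{1,2}(D) ∩ C_c(closure D)` is `𝓔₁`-dense in `W^{1,2}(D)`
and uniformly dense in `C_∞(closure D)`. -/
def MemClassD {d : ℕ} (D : Set (EuclideanSpace ℝ (Fin d))) : Prop :=
  IsOpen D ∧ IsConnected D ∧
  (∀ u g, MemW12 D u g → ∀ ε > (0:ℝ), ∃ v gv, MemW12 D v gv ∧
      ContinuousOn v (closure D) ∧
      (∃ K, IsCompact K ∧ ∀ x ∈ closure D \ K, v x = 0) ∧
      Dform D (g - gv) (g - gv) + ∫ x in D, (u x - v x) ^ 2 < ε) ∧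
  (∀ f : EuclideanSpace ℝ (Fin d) → ℝ, ContinuousOn f (closure D) →
      Tendsto f (Filter.cocompact _ ⊓ 𝓟 (closure D)) (𝓝 0) →
      ∀ ε > (0:ℝ), ∃ v gv, MemW12 D v gv ∧ ContinuousOn v (closure D) ∧
        (∃ K, IsCompact K ∧ ∀ x ∈ closure D \ K, v x = 0) ∧
        ∀ x ∈ closure D, |f x - v x| ≤ ε)

/-- an unbounded uniform domain containing the origin contains balls
`B(y_k, k)` with `C·k ≤ |y_k| ≤ C²·k`. -/
theorem stmt_0 (d : ℕ) (D : Set (EuclideanSpace ℝ (Fin d))) (C : ℝ) (hC : 1 ≤ C)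
    (hopen : IsOpen D) (hconn : IsConnected D) (hunb : ¬ Bornology.IsBounded D)
    (h0 : (0 : EuclideanSpace ℝ (Fin d)) ∈ D) (hU : IsUniformDomain D C) :
    ∀ k : ℕ, 1 ≤ k → ∃ y ∈ D,
      C * k ≤ ‖y‖ ∧ ‖y‖ ≤ C ^ 2 * k ∧ Metric.ball y k ⊆ D := by
  intro k hk
  have hk1 : (1:ℝ) ≤ (k:ℝ) := by exact_mod_cast hk
  have hC0 : (0:ℝ) < C := lt_of_lt_of_le one_pos hC
  obtain ⟨x, hxD, hx⟩ : ∃ x ∈ D, 2 * (C^2 * k) < ‖x‖ := by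
    by_contra h
    push_neg at h
    exact hunb (isBounded_iff_forall_norm_le.2 ⟨2 * (C^2 * k), fun z hz => h z hz⟩)
  obtain ⟨γ, hγc, hγ0, hγ1, hγD, _, hγdist⟩ := hU 0 h0 x hxD
  have hcont : ContinuousOn (fun t => ‖γ t‖) (Icc 0 1) := hγc.norm
  have hmem : C ^ 2 * k ∈ Icc ‖γ 0‖ ‖γ 1‖ := by
    rw [hγ0, hγ1]
    constructor
    · simp only [norm_zero]; positivity
    · nlinarith
  obtain ⟨t, ht, hnorm0⟩ := intermediate_value_Icc zero_le_one hcont hmem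
  have hnorm : ‖γ t‖ = C ^ 2 * k := hnorm0
  refine ⟨γ t, hγD t ht, ?_, ?_, ?_⟩
  · rw [hnorm]
    nlinarith [mul_le_mul_of_nonneg_right hC (by positivity : (0:ℝ) ≤ C * k)]
  · rw [hnorm]
  · have hmin := hγdist t ht
    have hd0 : dist (0 : EuclideanSpace ℝ (Fin d)) (γ t) = C ^ 2 * k := by
      rw [dist_comm, dist_zero_right, hnorm]
    have hdx : C ^ 2 * k ≤ dist (γ t) x := by
      have h1 : ‖x‖ - ‖γ t‖ ≤ ‖γ t - x‖ := by
        have := norm_sub_norm_le x (γ t)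
        rwa [norm_sub_rev] at this
      rw [dist_eq_norm]
      linarith
    have hk_le : (k:ℝ) ≤ infDist (γ t) Dᶜ := by
      rw [hd0] at hmin
      have hmin' : C ^ 2 * k ≤ C * infDist (γ t) Dᶜ := le_trans (le_min le_rfl hdx) hmin
      have : C * k ≤ infDist (γ t) Dᶜ := by
        have := (mul_le_mul_iff_right₀ hC0).1 (by nlinarith : C * (C * k) ≤ C * infDist (γ t) Dᶜ)
        exact this
      nlinarith
    intro z hz
    by_contra hzD
    have : infDist (γ t) Dᶜ ≤ dist (γ t) z := infDist_le_dist_of_mem hzD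
    rw [dist_comm] at this
    rw [mem_ball] at hz
    linarith
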